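/- arXiv:1712.00615 — 2 statements merged into one kernel-verified Lean document; each statement's English description precedes it below -/
import Mathlib

section
/- Let 0 < ε < 1, let n ≥ d ≥ 1 be integers, and set d' = (d+1)(1+ε)/(1−ε). Let μ be a finitely supported probability distribution over deterministic adaptive group-testing algorithms (decision trees) on ground set [n] such that every tree T in the support of μ satisfies (1−ε)|I| ≤ T(I) ≤ (1+ε)|I| for every I ⊆ [n] (i.e., μ is a randomized Las Vegas algorithm estimating the number of defectives up to factor 1±ε with probability 1). Then there exists I₀ ⊆ [n] with |I₀| = d such that the expected number of queries E_{T∼μ}[ |Q(T,I₀)| ] ≥ log₂( C(n,d) / C(⌈d'⌉−1, d) ), where C(a,b) denotes the binomial coefficient. -/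
/-!
Fix one tree `T` that is correct on every input. Defective sets of size `d` that produce the same
answer string reach the same leaf, and then so does their union `U`; hence `U` receives the same
output, and correctness forces `|U| < d'`. So each leaf is reached by at most `C(⌈d'⌉ - 1, d)` sets
of size `d`, a Kraft-type induction over the tree gives `∑_{|I| = d} 2^{-|Q(T,I)|} ≤ C(⌈d'⌉ - 1, d)`,
and Jensen's inequality for `exp` turns this into an average query count of at least
`log₂ (C(n,d) / C(⌈d'⌉ - 1, d))` over the `d`-sets. Averaging over `μ` as well, some `d`-set `I₀`
does at least as badly as the average.
-/

/-- A deterministic adaptive group-testing algorithm on ground set `[n]`,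
modeled as a finite binary decision tree: internal nodes are labeled by a
query `Q ⊆ [n]` and have two children (for answers `0` and `1`);
leaves are labeled by an output in `ℕ`. -/
inductive GTTree (n : ℕ) : Type where
  | leaf (out : ℕ) : GTTree n
  | node (q : Finset (Fin n)) (f0 f1 : GTTree n) : GTTree n

namespace GTTree

/-- The answer to a query `q` on the set `I` of defective items:
`true` iff `q ∩ I ≠ ∅`. -/
def answer {n : ℕ} (q I : Finset (Fin n)) : Bool :=
  decide (q ∩ I).Nonempty

/-- `T.output I`: the output label of the leaf reached when running `T`
on the defective set `I`. -/
def output {n : ℕ} : GTTree n → Finset (Fin n) → ℕ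
  | leaf out, _ => out
  | node q f0 f1, I => if answer q I then f1.output I else f0.output I

/-- `T.queries I`: the list of queries along the root-to-leaf path followed
when running `T` on the defective set `I`. -/
def queries {n : ℕ} : GTTree n → Finset (Fin n) → List (Finset (Fin n))
  | leaf _, _ => []
  | node q f0 f1, I => q :: (if answer q I then f1.queries I else f0.queries I)

/-- `T.answers I`: the answer string (sequence of branch bits) along the
root-to-leaf path followed when running `T` on the defective set `I`. -/
def answers {n : ℕ} : GTTree n → Finset (Fin n) → List Bool
  | leaf _, _ => []
  | node q f0 f1, I =>
      answer q I :: (if answer q I then f1.answers I else f0.answers I)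

end GTTree

open Finset Real

namespace GTTree

variable {n : ℕ}

theorem answer_union (q I J : Finset (Fin n)) :
    answer q (I ∪ J) = (answer q I || answer q J) := by
  simp [answer, inter_union_distrib_left]

theorem answers_union_of_answers_eq (T : GTTree n) {I J : Finset (Fin n)}
    (h : T.answers I = T.answers J) : T.answers (I ∪ J) = T.answers I := by
  induction T with
  | leaf => rfl
  | node q f0 f1 ih0 ih1 =>
    simp only [answers, List.cons.injEq] at h ⊢
    obtain ⟨hq, hrest⟩ := h
    rw [answer_union, ← hq, Bool.or_self]
    rw [← hq] at hrest
    cases hb : answer q I <;>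
      simp only [hb, if_true, Bool.false_eq_true, if_false, true_and] at hrest ⊢
    exacts [ih0 hrest, ih1 hrest]

theorem answers_sup_eq (T : GTTree n) {G : Finset (Finset (Fin n))} (hG : G.Nonempty)
    {s : List Bool} (h : ∀ I ∈ G, T.answers I = s) : T.answers (G.sup id) = s := by
  induction hG using Nonempty.cons_induction with
  | singleton I => simpa using h I (mem_singleton_self I)
  | cons I G hI hG ih =>
    have hI : T.answers I = s := h I (mem_cons_self I G)
    have hG : T.answers (G.sup id) = s := ih fun J hJ => h J (mem_cons_of_mem hJ)
    rw [sup_cons, id_eq, sup_eq_union, T.answers_union_of_answers_eq (hI.trans hG.symm), hI]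

theorem output_eq_of_answers_eq (T : GTTree n) {I J : Finset (Fin n)}
    (h : T.answers I = T.answers J) : T.output I = T.output J := by
  induction T with
  | leaf => rfl
  | node q f0 f1 ih0 ih1 =>
    simp only [answers, List.cons.injEq] at h
    obtain ⟨hq, hrest⟩ := h
    rw [← hq] at hrest
    rw [output, output, ← hq]
    cases hb : answer q I <;> simp only [hb, if_true, Bool.false_eq_true, if_false] at hrest ⊢
    exacts [ih0 hrest, ih1 hrest]

/-- A Kraft-type inequality: each node splits the weight `2^{-depth}` evenly between its two
subtrees, so the weight of `F` is at most the largest number of its members sharing a leaf. -/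
theorem sum_inv_two_pow_length_queries_le (T : GTTree n) (F : Finset (Finset (Fin n))) {K : ℝ}
    (hK : ∀ G ⊆ F, (∀ I ∈ G, ∀ J ∈ G, T.answers I = T.answers J) → (G.card : ℝ) ≤ K) :
    ∑ I ∈ F, ((2 : ℝ) ^ (T.queries I).length)⁻¹ ≤ K := by
  induction T generalizing F with
  | leaf => simpa [queries] using hK F subset_rfl (by simp [answers])
  | node q f0 f1 ih0 ih1 =>
    have branch : ∀ (b : Bool) (f : GTTree n),
        (∀ I, answer q I = b → (node q f0 f1).queries I = q :: f.queries I ∧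
          (node q f0 f1).answers I = b :: f.answers I) →
        (∀ F', (∀ G ⊆ F', (∀ I ∈ G, ∀ J ∈ G, f.answers I = f.answers J) → (G.card : ℝ) ≤ K) →
          ∑ I ∈ F', ((2 : ℝ) ^ (f.queries I).length)⁻¹ ≤ K) →
        ∑ I ∈ F with answer q I = b, ((2 : ℝ) ^ ((node q f0 f1).queries I).length)⁻¹ ≤ K / 2 := by
      intro b f hf ih
      have hsum := ih (F.filter (answer q · = b)) fun G hG hGf => hK G
        (hG.trans (filter_subset _ _)) fun I hI J hJ => by
          rw [(hf I (mem_filter.1 (hG hI)).2).2, (hf J (mem_filter.1 (hG hJ)).2).2, hGf I hI J hJ]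
      rw [sum_congr rfl fun I hI => by rw [(hf I (mem_filter.1 hI).2).1, List.length_cons,
        pow_succ, mul_inv, ← div_eq_mul_inv], ← sum_div]
      linarith
    have h1 := branch true f1 (fun I hb => by simp [queries, answers, hb]) ih1
    have h0 := branch false f0 (fun I hb => by simp [queries, answers, hb]) ih0
    rw [← sum_filter_add_sum_filter_not F (answer q · = true)]
    simp only [Bool.not_eq_true] at h0 ⊢
    linarith

def IsApproxCounter (ε : ℝ) (T : GTTree n) : Prop :=
  ∀ I : Finset (Fin n), (1 - ε) * (I.card : ℝ) ≤ (T.output I : ℝ) ∧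
    (T.output I : ℝ) ≤ (1 + ε) * (I.card : ℝ)

end GTTree

theorem le_toNat_ceil_sub_one_of_lt {k : ℕ} {x : ℝ} (h : (k : ℝ) < x) :
    k ≤ (⌈x⌉ - 1).toNat := by
  have : (k : ℤ) < ⌈x⌉ := Int.lt_ceil.2 (by exact_mod_cast h)
  omega

theorem logb_card_div_le_sum_div_card {ι : Type*} {s : Finset ι} (hs : s.Nonempty) (L : ι → ℕ)
    {K : ℝ} (hK : ∑ i ∈ s, ((2 : ℝ) ^ L i)⁻¹ ≤ K) :
    logb 2 (s.card / K) ≤ (∑ i ∈ s, (L i : ℝ)) / s.card := by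
  set N : ℝ := (s.card : ℝ)
  have hN : 0 < N := by simpa [N] using hs.card_pos
  have hKpos : 0 < K := (sum_pos (fun _ _ => by positivity) hs).trans_le hK
  have hexp : ∀ k : ℕ, exp (-(k * log 2)) = ((2 : ℝ) ^ k)⁻¹ := fun k => by
    rw [exp_neg, exp_nat_mul, exp_log two_pos]
  have jensen := convexOn_exp.map_sum_le (t := s) (w := fun _ => N⁻¹)
    (p := fun i => -(L i * log 2)) (fun _ _ => by positivity)
    (by rw [sum_const, nsmul_eq_mul, mul_inv_cancel₀ hN.ne']) (fun _ _ => Set.mem_univ _)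
  simp only [smul_eq_mul, hexp, ← mul_sum] at jensen
  have hexp_avg : exp (-((∑ i ∈ s, (L i : ℝ)) / N * log 2)) ≤ K / N :=
    calc exp (-((∑ i ∈ s, (L i : ℝ)) / N * log 2))
        = exp (N⁻¹ * ∑ i ∈ s, -(L i * log 2)) := by
          rw [sum_neg_distrib, ← sum_mul]
          ring_nf
      _ ≤ N⁻¹ * ∑ i ∈ s, ((2 : ℝ) ^ L i)⁻¹ := jensen
      _ ≤ K / N := by
          rw [inv_mul_eq_div]
          gcongr
  have hlog := log_le_log (exp_pos _) hexp_avg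
  rw [log_exp] at hlog
  rw [logb, div_le_iff₀ (log_pos one_lt_two), log_div hN.ne' hKpos.ne']
  rw [log_div hKpos.ne' hN.ne'] at hlog
  linarith

theorem exists_le_weighted_sum_of_le_average {Ω ι : Type*} [Fintype Ω] {p : Ω → ℝ}
    (hp : ∀ ω, 0 ≤ p ω) (hp1 : ∑ ω, p ω = 1) {D : Finset ι} (hD : D.Nonempty)
    {f : Ω → ι → ℝ} {c : ℝ} (hf : ∀ ω, 0 < p ω → c ≤ (∑ i ∈ D, f ω i) / D.card) :
    ∃ i ∈ D, c ≤ ∑ ω, p ω * f ω i := by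
  have hN : (0 : ℝ) < D.card := by exact_mod_cast hD.card_pos
  refine exists_le_of_sum_le hD ?_
  calc ∑ _i ∈ D, c = D.card * ∑ ω, p ω * c := by rw [← sum_mul, hp1, one_mul, sum_const, nsmul_eq_mul]
    _ ≤ D.card * ∑ ω, p ω * ((∑ i ∈ D, f ω i) / D.card) := by
      refine mul_le_mul_of_nonneg_left (sum_le_sum fun ω _ => ?_) hN.le
      rcases (hp ω).eq_or_lt with h | h
      · simp [← h]
      · exact mul_le_mul_of_nonneg_left (hf ω h) (hp ω)
    _ = ∑ i ∈ D, ∑ ω, p ω * f ω i := by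
      rw [sum_comm, mul_sum]
      refine sum_congr rfl fun ω _ => ?_
      rw [← mul_sum]
      field_simp

namespace GTTree.IsApproxCounter

variable {n d : ℕ} {ε : ℝ} {T : GTTree n}

theorem card_mul_le_of_answers_eq (hT : IsApproxCounter ε T) {I J : Finset (Fin n)}
    (h : T.answers J = T.answers I) : (1 - ε) * (J.card : ℝ) ≤ (1 + ε) * I.card :=
  calc (1 - ε) * (J.card : ℝ) ≤ T.output J := (hT J).1
    _ = T.output I := by rw [T.output_eq_of_answers_eq h]
    _ ≤ (1 + ε) * I.card := (hT I).2

theorem card_le_of_answers_eq (hε : 0 < ε) (hε1 : ε < 1) (hT : IsApproxCounter ε T)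
    {I J : Finset (Fin n)} (hI : I.card = d) (h : T.answers J = T.answers I) :
    J.card ≤ (⌈((d : ℝ) + 1) * (1 + ε) / (1 - ε)⌉ - 1).toNat := by
  refine le_toNat_ceil_sub_one_of_lt ((lt_div_iff₀ (by linarith)).2 ?_)
  have := hT.card_mul_le_of_answers_eq h
  rw [hI] at this
  linarith

theorem card_le_choose_of_answers_eq (hε : 0 < ε) (hε1 : ε < 1) (hT : IsApproxCounter ε T)
    {G : Finset (Finset (Fin n))} (hGd : ∀ I ∈ G, I.card = d)
    (hG : ∀ I ∈ G, ∀ J ∈ G, T.answers I = T.answers J) :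
    G.card ≤ (⌈((d : ℝ) + 1) * (1 + ε) / (1 - ε)⌉ - 1).toNat.choose d := by
  rcases G.eq_empty_or_nonempty with rfl | ⟨I, hI⟩
  · simp
  have hU : T.answers (G.sup id) = T.answers I :=
    T.answers_sup_eq ⟨I, hI⟩ fun J hJ => hG J hJ I hI
  calc G.card ≤ (powersetCard d (G.sup id)).card :=
        card_le_card fun J hJ => mem_powersetCard.2 ⟨le_sup (f := id) hJ, hGd J hJ⟩
    _ = (G.sup id).card.choose d := card_powersetCard d _
    _ ≤ _ := Nat.choose_le_choose d (hT.card_le_of_answers_eq hε hε1 (hGd I hI) hU)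

theorem logb_le_sum_length_queries_div (hε : 0 < ε) (hε1 : ε < 1) (hT : IsApproxCounter ε T)
    (hdn : d ≤ n) :
    logb 2 ((n.choose d : ℝ) / ((⌈((d : ℝ) + 1) * (1 + ε) / (1 - ε)⌉ - 1).toNat.choose d : ℝ)) ≤
      (∑ I ∈ powersetCard d (univ : Finset (Fin n)), ((T.queries I).length : ℝ)) /
        n.choose d := by
  have hD : (powersetCard d (univ : Finset (Fin n))).card = n.choose d := by simp
  have hDne : (powersetCard d (univ : Finset (Fin n))).Nonempty :=
    powersetCard_nonempty.2 (by simpa using hdn)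
  have := logb_card_div_le_sum_div_card hDne (fun I => (T.queries I).length)
    (T.sum_inv_two_pow_length_queries_le _ fun G hG hGans => Nat.cast_le.2 <|
      hT.card_le_choose_of_answers_eq hε hε1 (fun I hI => (mem_powersetCard.1 (hG hI)).2) hGans)
  rwa [hD] at this

end GTTree.IsApproxCounter

theorem stmt5_general {n d : ℕ} (ε : ℝ) (hε : 0 < ε) (hε1 : ε < 1) (hdn : d ≤ n)
    {Ω : Type} [Fintype Ω] (p : Ω → ℝ) (hp : ∀ ω, 0 ≤ p ω) (hp1 : ∑ ω, p ω = 1)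
    (Alg : Ω → GTTree n)
    (hT : ∀ ω, 0 < p ω → ∀ I : Finset (Fin n),
      (1 - ε) * (I.card : ℝ) ≤ ((Alg ω).output I : ℝ) ∧
        ((Alg ω).output I : ℝ) ≤ (1 + ε) * (I.card : ℝ)) :
    ∃ I₀ : Finset (Fin n), I₀.card = d ∧
      ∑ ω, p ω * ((((Alg ω).queries I₀).length : ℝ)) ≥
        Real.logb 2 ((n.choose d : ℝ) /
          ((⌈((d : ℝ) + 1) * (1 + ε) / (1 - ε)⌉ - 1).toNat.choose d : ℝ)) := by
  obtain ⟨I₀, hI₀, hle⟩ := exists_le_weighted_sum_of_le_average hp hp1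
    (powersetCard_nonempty (s := univ).2 (by simpa using hdn))
    (f := fun ω I => ((Alg ω).queries I).length) fun ω hω => by
      rw [card_powersetCard, card_univ, Fintype.card_fin]
      exact GTTree.IsApproxCounter.logb_le_sum_length_queries_div hε hε1 (hT ω hω) hdn
  exact ⟨I₀, (mem_powersetCard.1 hI₀).2, hle⟩

/-- Las Vegas lower bound: for any finitely supported distribution over deterministic
decision trees, each of which estimates the number of defectives up to factor `1 ± ε`
(with probability 1), there is a set `I₀` of size `d` on which the expected number of
queries is at least `log₂ (C(n,d) / C(⌈d'⌉ - 1, d))`, where `d' = (d+1)(1+ε)/(1−ε)`.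
The distribution is modeled by a finite sample space `Ω` with weights `p`. -/
theorem stmt5 {n d : ℕ} (ε : ℝ) (hε : 0 < ε) (hε1 : ε < 1) (hd : 1 ≤ d) (hdn : d ≤ n)
    {Ω : Type} [Fintype Ω] (p : Ω → ℝ) (hp : ∀ ω, 0 ≤ p ω) (hp1 : ∑ ω, p ω = 1)
    (Alg : Ω → GTTree n)
    (hT : ∀ ω, 0 < p ω → ∀ I : Finset (Fin n),
      (1 - ε) * (I.card : ℝ) ≤ ((Alg ω).output I : ℝ) ∧
        ((Alg ω).output I : ℝ) ≤ (1 + ε) * (I.card : ℝ)) :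
    ∃ I₀ : Finset (Fin n), I₀.card = d ∧
      ∑ ω, p ω * ((((Alg ω).queries I₀).length : ℝ)) ≥
        Real.logb 2 ((n.choose d : ℝ) /
          ((⌈((d : ℝ) + 1) * (1 + ε) / (1 - ε)⌉ - 1).toNat.choose d : ℝ)) :=
  stmt5_general ε hε hε1 hdn p hp hp1 Alg hT
end

section
/- Let 0 < δ < 1 and let d ≥ 1, n ≥ d be integers, and set L = log₂ log₂ (2d/δ). Define Δ_i = 2^{2^{i²}} for i ≥ 1. Let (Q_i)_{i≥1} be independent random subsets of [n], where Q_i includes each element of [n] independently with probability 1 − 2^{−1/Δ_i}. Fix I ⊆ [n] with |I| = d, let i₀ be the least index i with Q_i ∩ I = ∅ (almost surely finite), and set D = 2·Δ_{i₀}·log₂(2/δ). Then E[i₀] ≤ √L + 3, and with probability at least 1 − δ, d ≤ D ≤ 2·(2d/δ)^{ 2^{ 2√L + 1 } }·log₂(2/δ). -/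
/-
Since `P(Q_i ∩ I = ∅) = 2^{-d/Δ_i}`, the set `Q_i` meets `I` with probability at most `d/Δ_i`.
With `T = ⌈√L⌉` one has `Δ_{T+j} ≥ (2d/δ)·2^j`, so `i₀ > T + j` has probability at most
`2^{-(j+1)}` and `E[i₀] ≤ T + 1`. For the second claim, outside an event of probability at most
`δ` the set `Q_T` misses `I` (so `i₀ ≤ T` and `Δ_{i₀} ≤ Δ_T ≤ (2d/δ)^{2^{2√L+1}}`) while every
`Q_i` with `i ≤ T` and `2·Δ_i·log₂(2/δ) < d` meets `I`. Because `Δ_{i+m} ≥ 2^m·Δ_i`, the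
probabilities `2^{-d/Δ_i}` of these bad indices decay geometrically and sum to at most `δ/2`.
-/

open MeasureTheory ProbabilityTheory Finset Real
open scoped ENNReal

noncomputable def doubleExpSq (i : ℕ) : ℝ := (2 : ℝ) ^ ((2 : ℝ) ^ ((i : ℝ) ^ 2))

lemma doubleExpSq_pos (i : ℕ) : 0 < doubleExpSq i := by
  unfold doubleExpSq; positivity

lemma doubleExpSq_mono : Monotone doubleExpSq := fun i j hij => by
  unfold doubleExpSq
  gcongr <;> norm_num

lemma two_rpow_natCast_sq (i : ℕ) : (2 : ℝ) ^ ((i : ℝ) ^ 2) = ((2 ^ (i ^ 2) : ℕ) : ℝ) := by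
  rw [← Nat.cast_pow, rpow_natCast]; push_cast; rfl

lemma add_two_pow_sq_le (i m : ℕ) : m + 2 ^ (i ^ 2) ≤ 2 ^ ((i + m) ^ 2) := by
  have hm : m + 1 ≤ 2 ^ m := Nat.lt_two_pow_self
  have hpos : 1 ≤ 2 ^ (i ^ 2) := Nat.one_le_two_pow
  calc m + 2 ^ (i ^ 2) ≤ 2 ^ m * 2 ^ (i ^ 2) := by nlinarith
    _ = 2 ^ (i ^ 2 + m) := by rw [pow_add, mul_comm]
    _ ≤ 2 ^ ((i + m) ^ 2) := Nat.pow_le_pow_right two_pos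
      (by nlinarith [Nat.le_self_pow two_ne_zero m, Nat.zero_le (i * m)])

lemma two_pow_mul_doubleExpSq_le (i m : ℕ) : 2 ^ m * doubleExpSq i ≤ doubleExpSq (i + m) := by
  unfold doubleExpSq
  rw [← rpow_natCast, ← rpow_add two_pos, two_rpow_natCast_sq, ← Nat.cast_add,
    two_rpow_natCast_sq]
  gcongr
  · norm_num
  · exact_mod_cast add_two_pow_sq_le i m

lemma mul_two_pow_le_doubleExpSq_add {x : ℝ} {T : ℕ} (hx : 2 ≤ x)
    (hT : logb 2 (logb 2 x) ≤ (T : ℝ) ^ 2) (j : ℕ) : x * 2 ^ j ≤ doubleExpSq (T + j) := by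
  have hc : 1 ≤ logb 2 x := by rw [le_logb_iff_rpow_le one_lt_two] <;> linarith
  have hcT : logb 2 x ≤ 2 ^ ((T : ℝ) ^ 2) := by
    rwa [← logb_le_iff_le_rpow one_lt_two (by linarith)]
  have hj : (j : ℝ) + 1 ≤ 2 ^ j := by exact_mod_cast Nat.lt_two_pow_self
  have hexp : (T : ℝ) ^ 2 + j ≤ ((T + j : ℕ) : ℝ) ^ 2 := by
    have : (j : ℝ) ≤ (j : ℝ) ^ 2 := by exact_mod_cast Nat.le_self_pow two_ne_zero j
    push_cast; nlinarith [(T.cast_nonneg : (0 : ℝ) ≤ T), (j.cast_nonneg : (0 : ℝ) ≤ j)]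
  calc x * 2 ^ j = 2 ^ (logb 2 x + j) := by
        rw [rpow_add two_pos, rpow_logb two_pos (by norm_num) (by linarith), rpow_natCast]
    _ ≤ 2 ^ (2 ^ ((T : ℝ) ^ 2) * (2 : ℝ) ^ j) := by
        gcongr
        · norm_num
        · nlinarith
    _ ≤ doubleExpSq (T + j) := by
        unfold doubleExpSq
        rw [← rpow_natCast 2 j, ← rpow_add two_pos]
        gcongr <;> norm_num [hexp]

lemma doubleExpSq_le_rpow {x : ℝ} {T : ℕ} (hx : 1 < x) (hL : 0 ≤ logb 2 (logb 2 x))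
    (hT : (T : ℝ) ≤ √(logb 2 (logb 2 x)) + 1) :
    doubleExpSq T ≤ x ^ (2 : ℝ) ^ (2 * √(logb 2 (logb 2 x)) + 1) := by
  set L := logb 2 (logb 2 x)
  have hc : 0 < logb 2 x := logb_pos one_lt_two hx
  have hT2 : (T : ℝ) ^ 2 ≤ L + (2 * √L + 1) := by
    nlinarith [sq_sqrt hL, sqrt_nonneg L, (T.cast_nonneg : (0 : ℝ) ≤ T)]
  calc doubleExpSq T ≤ 2 ^ (2 : ℝ) ^ (L + (2 * √L + 1)) := by
        unfold doubleExpSq; gcongr <;> norm_num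
    _ = x ^ (2 : ℝ) ^ (2 * √L + 1) := by
        rw [rpow_add two_pos, rpow_logb two_pos (by norm_num) hc, rpow_mul two_pos.le,
          rpow_logb two_pos (by norm_num) (by linarith)]

lemma one_sub_two_rpow_neg_le {y : ℝ} (hy : 0 ≤ y) : 1 - (2 : ℝ) ^ (-y) ≤ y := by
  have hlog : log 2 ≤ 1 := by linarith [log_le_sub_one_of_pos two_pos]
  rw [rpow_def_of_pos two_pos, mul_neg]
  nlinarith [one_sub_le_exp_neg (log 2 * y)]

lemma two_rpow_neg_inv_pow (Δ : ℝ) (k : ℕ) :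
    ((2 : ℝ) ^ (-(1 / Δ))) ^ k = (2 : ℝ) ^ (-(k / Δ)) := by
  rw [← rpow_natCast, ← rpow_mul two_pos.le]
  ring_nf

lemma sum_two_rpow_neg_le {S : Finset ℕ} {g : ℕ → ℝ} {c : ℝ} (hc : 1 ≤ c)
    (hg : ∀ i m, 2 ^ m * g (i + m) ≤ g i) (hS : ∀ i ∈ S, 2 * c < g i) :
    ∑ i ∈ S, (2 : ℝ) ^ (-g i) ≤ 2 ^ (-c) := by
  rcases S.eq_empty_or_nonempty with rfl | hne
  · simp only [sum_empty]; positivity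
  -- Measured from `b = max S`, the exponents grow like `g i ≥ 2^(b-i)·2c ≥ c + (b - i) + 1`.
  set b := S.max' hne
  have hterm : ∀ i ∈ S, (2 : ℝ) ^ (-g i) ≤ 2 ^ (-c) / 2 * (1 / 2) ^ (b - i) := by
    intro i hi
    obtain ⟨m, hm⟩ := Nat.exists_eq_add_of_le (S.le_max' i hi)
    have hm2 : (m : ℝ) + 1 ≤ 2 ^ m := by exact_mod_cast Nat.lt_two_pow_self
    have hgi : c + m + 1 ≤ g i := by
      have := hg i m
      rw [← hm] at this
      nlinarith [hS b (S.max'_mem hne), pow_pos (two_pos : (0:ℝ) < 2) m]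
    calc (2 : ℝ) ^ (-g i) ≤ 2 ^ (-c + (-1 + -(m : ℝ))) := by
          gcongr
          · norm_num
          · linarith
      _ = 2 ^ (-c) / 2 * (1 / 2) ^ (b - i) := by
          rw [rpow_add two_pos, rpow_add two_pos, rpow_neg_one, rpow_neg two_pos.le (m : ℝ),
            rpow_natCast, show b - i = m by omega, one_div, inv_pow]
          ring
  calc ∑ i ∈ S, (2 : ℝ) ^ (-g i)
      ≤ ∑ i ∈ range (b + 1), 2 ^ (-c) / 2 * (1 / 2) ^ (b - i) := by
        refine (sum_le_sum hterm).trans (sum_le_sum_of_subset_of_nonneg ?_ ?_)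
        · exact fun i hi => mem_range_succ_iff.mpr (S.le_max' i hi)
        · intros; positivity
    _ = 2 ^ (-c) / 2 * ∑ j ∈ range (b + 1), (1 / 2 : ℝ) ^ j := by
        rw [← mul_sum, ← sum_range_reflect (fun j => (1 / 2 : ℝ) ^ j), add_tsub_cancel_right]
    _ ≤ 2 ^ (-c) := by
        nlinarith [sum_geometric_two_le (b + 1), rpow_pos_of_pos two_pos (-c)]

section

variable {Ω : Type*} [MeasurableSpace Ω] {μ : Measure Ω}

lemma lintegral_natCast_le_tsum_measure_lt (f : Ω → ℕ) :
    ∫⁻ ω, (f ω : ℝ≥0∞) ∂μ ≤ ∑' k, μ {ω | k < f ω} := by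
  -- `f` need not be measurable, so the level sets are replaced by measurable hulls.
  set A : ℕ → Set Ω := fun k => toMeasurable μ {ω | k < f ω}
  have hpoint : ∀ ω, (f ω : ℝ≥0∞) ≤ ∑' k, (A k).indicator 1 ω := fun ω =>
    calc (f ω : ℝ≥0∞) = ∑ k ∈ range (f ω), (A k).indicator 1 ω := by
          rw [sum_congr rfl fun k hk => Set.indicator_of_mem
            (subset_toMeasurable μ _ (mem_range.mp hk)) (1 : Ω → ℝ≥0∞)]
          simp
      _ ≤ _ := ENNReal.sum_le_tsum _
  calc ∫⁻ ω, (f ω : ℝ≥0∞) ∂μ ≤ ∫⁻ ω, ∑' k, (A k).indicator 1 ω ∂μ := lintegral_mono hpoint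
    _ = ∑' k, μ (A k) := by
        rw [lintegral_tsum fun k => (measurable_one.indicator
          (measurableSet_toMeasurable μ _)).aemeasurable]
        exact tsum_congr fun k => lintegral_indicator_one (measurableSet_toMeasurable μ _)
    _ = ∑' k, μ {ω | k < f ω} := tsum_congr fun k => measure_toMeasurable _

lemma lintegral_natCast_le_add_one [IsProbabilityMeasure μ] (f : Ω → ℕ) (T : ℕ)
    (h : ∀ j, μ {ω | j + T < f ω} ≤ 2⁻¹ ^ (j + 1)) : ∫⁻ ω, (f ω : ℝ≥0∞) ∂μ ≤ T + 1 :=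
  calc ∫⁻ ω, (f ω : ℝ≥0∞) ∂μ ≤ ∑' k, μ {ω | k < f ω} := lintegral_natCast_le_tsum_measure_lt f
    _ = ∑ k ∈ range T, μ {ω | k < f ω} + ∑' j, μ {ω | j + T < f ω} :=
        ENNReal.summable.sum_add_tsum_nat_add'.symm
    _ ≤ ∑ k ∈ range T, 1 + ∑' j : ℕ, 2⁻¹ ^ (j + 1) :=
        add_le_add (sum_le_sum fun _ _ => prob_le_one) (ENNReal.tsum_le_tsum h)
    _ = T + 1 := by
        rw [ENNReal.tsum_geometric_add_one, ENNReal.one_sub_inv_two, inv_inv,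
          ENNReal.inv_mul_cancel two_ne_zero ENNReal.ofNat_ne_top]
        simp

lemma ofReal_one_sub_le_measure [IsProbabilityMeasure μ] {s : Set Ω} {ε : ℝ} (hε : 0 ≤ ε)
    (h : μ sᶜ ≤ ENNReal.ofReal ε) : ENNReal.ofReal (1 - ε) ≤ μ s :=
  calc ENNReal.ofReal (1 - ε) = 1 - ENNReal.ofReal ε := by
        rw [ENNReal.ofReal_sub 1 hε, ENNReal.ofReal_one]
    _ ≤ 1 - μ sᶜ := tsub_le_tsub_left h 1
    _ ≤ μ s := by
        rw [tsub_le_iff_right, ← measure_univ (μ := μ)]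
        exact measure_univ_le_add_compl s

end

section RandomSubset

variable {ι : Type*} [Fintype ι] [DecidableEq ι]

lemma prod_ite_mem_univ (s : Finset ι) (x y : ℝ) :
    ∏ j, (if j ∈ s then x else y) = x ^ #s * y ^ (Fintype.card ι - #s) := by
  rw [prod_ite, prod_const, prod_const, filter_mem_eq_inter, univ_inter, filter_not,
    filter_mem_eq_inter, univ_inter, card_sdiff_of_subset s.subset_univ, card_univ]

lemma sum_prod_ite_mem_univ (a : ℝ) :
    ∑ s : Finset ι, ∏ j, (if j ∈ s then 1 - a else a) = 1 := by
  simp_rw [prod_ite_mem_univ, ← card_univ, ← powerset_univ, sum_pow_mul_eq_add_pow,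
    sub_add_cancel, one_pow]

lemma sum_prod_ite_mem_of_inter_eq_empty (a : ℝ) (I : Finset ι) :
    ∑ s with s ∩ I = ∅, ∏ j, (if j ∈ s then 1 - a else a) = a ^ #I := by
  have hfilter : ({s | s ∩ I = ∅} : Finset (Finset ι)) = Iᶜ.powerset := by
    ext s
    simp [subset_compl_iff_disjoint_right, disjoint_iff_inter_eq_empty]
  have hsplit : ∀ s ∈ Iᶜ.powerset, ∏ j, (if j ∈ s then 1 - a else a)
      = a ^ #I * ((1 - a) ^ #s * a ^ (#Iᶜ - #s)) := by
    intro s hs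
    have := card_le_card (mem_powerset.mp hs)
    rw [prod_ite_mem_univ, card_compl] at *
    rw [mul_left_comm, ← pow_add]
    congr 2
    have := I.card_le_univ
    omega
  rw [hfilter, sum_congr rfl hsplit, ← mul_sum, sum_pow_mul_eq_add_pow, sub_add_cancel, one_pow,
    mul_one]

variable {Ω : Type*} [MeasurableSpace Ω] {μ : Measure Ω}

lemma measure_setOf_le_sum {α : Type*} [Fintype α] (X : Ω → α) (p : α → Prop) [DecidablePred p] :
    μ {ω | p (X ω)} ≤ ∑ s with p s, μ {ω | X ω = s} := by
  have : {ω | p (X ω)} = ⋃ s ∈ ({s | p s} : Finset α), {ω | X ω = s} := by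
    ext ω; simp
  rw [this]
  exact measure_biUnion_finset_le _ _

variable {X : Ω → Finset ι} {a : ℝ}

lemma measure_setOf_le_sum_prod (ha0 : 0 ≤ a) (ha1 : a ≤ 1)
    (hX : ∀ s, μ {ω | X ω = s} = ENNReal.ofReal (∏ j, if j ∈ s then 1 - a else a))
    (p : Finset ι → Prop) [DecidablePred p] :
    μ {ω | p (X ω)} ≤ ENNReal.ofReal (∑ s with p s, ∏ j, if j ∈ s then 1 - a else a) := by
  rw [ENNReal.ofReal_sum_of_nonneg fun s _ => prod_nonneg fun j _ => by split_ifs <;> linarith]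
  simpa only [hX] using measure_setOf_le_sum (μ := μ) X p

lemma measure_inter_eq_empty_le (ha0 : 0 ≤ a) (ha1 : a ≤ 1)
    (hX : ∀ s, μ {ω | X ω = s} = ENNReal.ofReal (∏ j, if j ∈ s then 1 - a else a))
    (I : Finset ι) : μ {ω | X ω ∩ I = ∅} ≤ ENNReal.ofReal (a ^ #I) := by
  simpa only [sum_prod_ite_mem_of_inter_eq_empty] using
    measure_setOf_le_sum_prod ha0 ha1 hX (· ∩ I = ∅)

lemma measure_inter_ne_empty_le (ha0 : 0 ≤ a) (ha1 : a ≤ 1)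
    (hX : ∀ s, μ {ω | X ω = s} = ENNReal.ofReal (∏ j, if j ∈ s then 1 - a else a))
    (I : Finset ι) : μ {ω | X ω ∩ I ≠ ∅} ≤ ENNReal.ofReal (1 - a ^ #I) := by
  have hsum := sum_filter_add_sum_filter_not univ (· ∩ I = ∅)
    (fun s : Finset ι => ∏ j, if j ∈ s then 1 - a else a)
  rw [sum_prod_ite_mem_of_inter_eq_empty, sum_prod_ite_mem_univ] at hsum
  rw [← hsum, add_sub_cancel_left]
  exact measure_setOf_le_sum_prod ha0 ha1 hX (· ∩ I ≠ ∅)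

variable {Δ : ℝ}

lemma measure_inter_eq_empty_le_two_rpow (hΔ : 0 < Δ)
    (hX : ∀ s, μ {ω | X ω = s} = ENNReal.ofReal
      (∏ j, if j ∈ s then 1 - (2 : ℝ) ^ (-(1 / Δ)) else (2 : ℝ) ^ (-(1 / Δ))))
    (I : Finset ι) : μ {ω | X ω ∩ I = ∅} ≤ ENNReal.ofReal ((2 : ℝ) ^ (-(#I / Δ))) := by
  rw [← two_rpow_neg_inv_pow]
  exact measure_inter_eq_empty_le (by positivity)
    (rpow_le_one_of_one_le_of_nonpos one_le_two (by simp [hΔ.le])) hX I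

lemma measure_inter_ne_empty_le_div (hΔ : 0 < Δ)
    (hX : ∀ s, μ {ω | X ω = s} = ENNReal.ofReal
      (∏ j, if j ∈ s then 1 - (2 : ℝ) ^ (-(1 / Δ)) else (2 : ℝ) ^ (-(1 / Δ))))
    (I : Finset ι) : μ {ω | X ω ∩ I ≠ ∅} ≤ ENNReal.ofReal (#I / Δ) := by
  refine (measure_inter_ne_empty_le (by positivity)
    (rpow_le_one_of_one_le_of_nonpos one_le_two (by simp [hΔ.le])) hX I).trans ?_
  rw [two_rpow_neg_inv_pow]
  exact ENNReal.ofReal_le_ofReal (one_sub_two_rpow_neg_le (by positivity))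

end RandomSubset

lemma two_le_two_mul_div {d δ : ℝ} (hd : 1 ≤ d) (hδ : 0 < δ) (hδ1 : δ ≤ 1) : 2 ≤ 2 * d / δ := by
  rw [le_div_iff₀ hδ]; nlinarith

section FirstDisjointIndex

variable {ι : Type*} [DecidableEq ι] {Ω : Type*}

/-- This is `0` when no such index exists (`sInf ∅ = 0`). -/
noncomputable def firstDisjointIndex (Q : ℕ → Ω → Finset ι) (I : Finset ι) (ω : Ω) : ℕ :=
  sInf {i | 1 ≤ i ∧ Q i ω ∩ I = ∅}

variable {Q : ℕ → Ω → Finset ι} {I : Finset ι}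

lemma firstDisjointIndex_le {ω : Ω} {k : ℕ} (hk : 1 ≤ k) (h : Q k ω ∩ I = ∅) :
    firstDisjointIndex Q I ω ≤ k :=
  Nat.sInf_le ⟨hk, h⟩

lemma firstDisjointIndex_spec {ω : Ω} {k : ℕ} (hk : 1 ≤ k) (h : Q k ω ∩ I = ∅) :
    1 ≤ firstDisjointIndex Q I ω ∧ Q (firstDisjointIndex Q I ω) ω ∩ I = ∅ :=
  Nat.sInf_mem (s := {i | 1 ≤ i ∧ Q i ω ∩ I = ∅}) ⟨k, hk, h⟩

variable [Fintype ι] [MeasurableSpace Ω] {μ : Measure Ω} {δ : ℝ} {T : ℕ}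

lemma lintegral_firstDisjointIndex_le [IsProbabilityMeasure μ]
    (hdist : ∀ i, 1 ≤ i → ∀ s : Finset ι, μ {ω | Q i ω = s} = ENNReal.ofReal (∏ j,
      if j ∈ s then 1 - (2 : ℝ) ^ (-(1 / doubleExpSq i)) else (2 : ℝ) ^ (-(1 / doubleExpSq i))))
    (hδ : 0 < δ) (hδ1 : δ ≤ 1) (hI : I.Nonempty) (hT1 : 1 ≤ T)
    (hT : logb 2 (logb 2 (2 * #I / δ)) ≤ (T : ℝ) ^ 2) :
    ∫⁻ ω, (firstDisjointIndex Q I ω : ℝ≥0∞) ∂μ ≤ T + 1 := by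
  have hx := two_le_two_mul_div (Nat.one_le_cast.mpr hI.card_pos) hδ hδ1
  refine lintegral_natCast_le_add_one _ T fun j => ?_
  have hsub : {ω | j + T < firstDisjointIndex Q I ω} ⊆ {ω | Q (j + T) ω ∩ I ≠ ∅} :=
    fun ω hω hQ => (firstDisjointIndex_le (by omega) hQ).not_gt hω
  have hratio : (#I : ℝ) / doubleExpSq (j + T) ≤ (1 / 2) ^ (j + 1) := by
    have := mul_two_pow_le_doubleExpSq_add hx hT j
    rw [add_comm T j] at this
    rw [div_le_iff₀ (doubleExpSq_pos _)]
    calc (#I : ℝ) = (1 / 2) ^ (j + 1) * (2 * #I * 2 ^ j) := by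
          rw [one_div, inv_pow, pow_succ]; field_simp
      _ ≤ (1 / 2) ^ (j + 1) * (2 * #I / δ * 2 ^ j) := by
        gcongr; exact le_div_self (by positivity) hδ hδ1
      _ ≤ _ := by gcongr
  calc μ {ω | j + T < firstDisjointIndex Q I ω}
      ≤ ENNReal.ofReal (#I / doubleExpSq (j + T)) :=
        (measure_mono hsub).trans
          (measure_inter_ne_empty_le_div (doubleExpSq_pos _) (hdist _ (by omega)) I)
    _ ≤ ENNReal.ofReal ((1 / 2) ^ (j + 1)) := ENNReal.ofReal_le_ofReal hratio
    _ = 2⁻¹ ^ (j + 1) := by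
        rw [ENNReal.ofReal_pow (by norm_num), one_div, ENNReal.ofReal_inv_of_pos two_pos,
          ENNReal.ofReal_ofNat]

lemma ofReal_one_sub_le_measure_firstDisjointIndex [IsProbabilityMeasure μ]
    (hdist : ∀ i, 1 ≤ i → ∀ s : Finset ι, μ {ω | Q i ω = s} = ENNReal.ofReal (∏ j,
      if j ∈ s then 1 - (2 : ℝ) ^ (-(1 / doubleExpSq i)) else (2 : ℝ) ^ (-(1 / doubleExpSq i))))
    (hδ : 0 < δ) (hδ1 : δ ≤ 1) (hI : I.Nonempty) (hT1 : 1 ≤ T)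
    (hT : logb 2 (logb 2 (2 * #I / δ)) ≤ (T : ℝ) ^ 2) :
    ENNReal.ofReal (1 - δ) ≤ μ {ω |
      (#I : ℝ) ≤ 2 * doubleExpSq (firstDisjointIndex Q I ω) * logb 2 (2 / δ) ∧
        firstDisjointIndex Q I ω ≤ T} := by
  set c := logb 2 (2 / δ)
  have hc : 1 ≤ c := by
    rw [le_logb_iff_rpow_le one_lt_two (by positivity), rpow_one, le_div_iff₀ hδ]; linarith
  have hc' : (2 : ℝ) ^ (-c) = δ / 2 := by
    rw [rpow_neg two_pos.le, rpow_logb two_pos (by norm_num) (by positivity), inv_div]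
  have hΔT : 2 * #I / δ ≤ doubleExpSq T := by
    simpa using mul_two_pow_le_doubleExpSq_add
      (two_le_two_mul_div (Nat.one_le_cast.mpr hI.card_pos) hδ hδ1) hT 0
  set S := {i ∈ Icc 1 T | 2 * doubleExpSq i * c < #I}
  have hsub : {ω | (#I : ℝ) ≤ 2 * doubleExpSq (firstDisjointIndex Q I ω) * c ∧
      firstDisjointIndex Q I ω ≤ T}ᶜ ⊆
      {ω | Q T ω ∩ I ≠ ∅} ∪ ⋃ i ∈ S, {ω | Q i ω ∩ I = ∅} := by
    intro ω hω
    by_cases hQT : Q T ω ∩ I = ∅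
    · obtain ⟨h1, hQ⟩ := firstDisjointIndex_spec hT1 hQT
      have hle := firstDisjointIndex_le hT1 hQT
      have hlt : 2 * doubleExpSq (firstDisjointIndex Q I ω) * c < #I :=
        not_le.mp fun h => hω ⟨h, hle⟩
      exact Or.inr (Set.mem_biUnion (mem_filter.mpr ⟨mem_Icc.mpr ⟨h1, hle⟩, hlt⟩) hQ)
    · exact Or.inl hQT
  have hsum : ∑ i ∈ S, (2 : ℝ) ^ (-(#I / doubleExpSq i)) ≤ δ / 2 := by
    rw [← hc']
    refine sum_two_rpow_neg_le hc (fun i m => ?_) fun i hi => ?_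
    · have := two_pow_mul_doubleExpSq_le i m
      rw [mul_div_assoc', div_le_div_iff₀ (doubleExpSq_pos _) (doubleExpSq_pos _)]
      nlinarith [doubleExpSq_pos i, (#I).cast_nonneg (α := ℝ)]
    · rw [lt_div_iff₀ (doubleExpSq_pos _)]
      linarith [(mem_filter.mp hi).2]
  refine ofReal_one_sub_le_measure hδ.le ((measure_mono hsub).trans ?_)
  calc μ ({ω | Q T ω ∩ I ≠ ∅} ∪ ⋃ i ∈ S, {ω | Q i ω ∩ I = ∅})
      ≤ μ {ω | Q T ω ∩ I ≠ ∅} + ∑ i ∈ S, μ {ω | Q i ω ∩ I = ∅} :=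
        (measure_union_le _ _).trans (add_le_add le_rfl (measure_biUnion_finset_le _ _))
    _ ≤ ENNReal.ofReal (#I / doubleExpSq T) +
          ∑ i ∈ S, ENNReal.ofReal ((2 : ℝ) ^ (-(#I / doubleExpSq i))) := by
        refine add_le_add (measure_inter_ne_empty_le_div (doubleExpSq_pos _) (hdist T hT1) I)
          (sum_le_sum fun i hi => ?_)
        exact measure_inter_eq_empty_le_two_rpow (doubleExpSq_pos _)
          (hdist i (mem_Icc.mp (mem_filter.mp hi).1).1) I
    _ ≤ ENNReal.ofReal (δ / 2) + ENNReal.ofReal (δ / 2) := by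
        rw [← ENNReal.ofReal_sum_of_nonneg fun i _ => by positivity]
        refine add_le_add (ENNReal.ofReal_le_ofReal ?_) (ENNReal.ofReal_le_ofReal hsum)
        rw [div_le_iff₀ (doubleExpSq_pos _)]
        rw [div_le_iff₀ hδ] at hΔT
        linarith
    _ = ENNReal.ofReal δ := by rw [← ENNReal.ofReal_add (by positivity) (by positivity), add_halves]

end FirstDisjointIndex

theorem stmt15_general {n : ℕ} (δ : ℝ) (hδ : 0 < δ) (hδ1 : δ < 1)
    (d : ℕ) (hd : 1 ≤ d)
    (L : ℝ) (hL : L = Real.logb 2 (Real.logb 2 (2 * (d : ℝ) / δ)))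
    (Δ : ℕ → ℝ) (hΔ : ∀ i, Δ i = (2 : ℝ) ^ ((2 : ℝ) ^ ((i : ℝ) ^ 2)))
    {Ω : Type} [MeasurableSpace Ω] (μ : Measure Ω) [IsProbabilityMeasure μ]
    (Q : ℕ → Ω → Finset (Fin n))
    (hdist : ∀ i, 1 ≤ i → ∀ s : Finset (Fin n),
      μ {ω | Q i ω = s} = ENNReal.ofReal (∏ j : Fin n,
        if j ∈ s then 1 - (2 : ℝ) ^ (-(1 / Δ i)) else (2 : ℝ) ^ (-(1 / Δ i))))
    (I : Finset (Fin n)) (hI : I.card = d)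
    (i₀ : Ω → ℕ) (hi₀ : ∀ ω, i₀ ω = sInf {i | 1 ≤ i ∧ Q i ω ∩ I = ∅})
    (D : Ω → ℝ) (hD : ∀ ω, D ω = 2 * Δ (i₀ ω) * Real.logb 2 (2 / δ)) :
    ∫⁻ ω, (i₀ ω : ENNReal) ∂μ ≤ ENNReal.ofReal (Real.sqrt L + 3) ∧
      ENNReal.ofReal (1 - δ) ≤
        μ {ω | (d : ℝ) ≤ D ω ∧
          D ω ≤ 2 * (2 * (d : ℝ) / δ) ^ ((2 : ℝ) ^ (2 * Real.sqrt L + 1)) *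
            Real.logb 2 (2 / δ)} := by
  obtain rfl : Δ = doubleExpSq := funext hΔ
  obtain rfl : i₀ = firstDisjointIndex Q I := funext hi₀
  subst hI hL
  have hx : 2 < 2 * (#I : ℝ) / δ := by
    rw [lt_div_iff₀ hδ]; nlinarith [(Nat.one_le_cast.mpr hd : (1 : ℝ) ≤ #I)]
  set L := logb 2 (logb 2 (2 * (#I : ℝ) / δ))
  have hLpos : 0 < L :=
    logb_pos one_lt_two ((lt_logb_iff_rpow_lt one_lt_two (by positivity)).mpr (by simpa using hx))
  set T := ⌈√L⌉₊
  have hT1 : 1 ≤ T := Nat.ceil_pos.mpr (sqrt_pos.mpr hLpos)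
  have hLT : L ≤ (T : ℝ) ^ 2 := by nlinarith [Nat.le_ceil √L, sq_sqrt hLpos.le, sqrt_nonneg L]
  have hTL : (T : ℝ) ≤ √L + 1 := (Nat.ceil_lt_add_one (sqrt_nonneg L)).le
  have hIne := card_pos.mp hd
  refine ⟨(lintegral_firstDisjointIndex_le hdist hδ hδ1.le hIne hT1 hLT).trans ?_,
    (ofReal_one_sub_le_measure_firstDisjointIndex hdist hδ hδ1.le hIne hT1 hLT).trans
      (measure_mono fun ω ⟨hlow, hle⟩ => ?_)⟩
  · rw [← ENNReal.ofReal_natCast, ← ENNReal.ofReal_one,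
      ← ENNReal.ofReal_add (by positivity) zero_le_one]
    exact ENNReal.ofReal_le_ofReal (by linarith)
  · have hc : 0 ≤ logb 2 (2 / δ) := logb_nonneg one_lt_two (by rw [le_div_iff₀ hδ]; linarith)
    have hΔle := (doubleExpSq_mono hle).trans (doubleExpSq_le_rpow (by linarith) hLpos.le hTL)
    rw [Set.mem_ofPred_eq, hD]
    exact ⟨hlow, by gcongr⟩

/-- For `Δ_i = 2^{2^{i²}}` and independent random subsets `Q_i ⊆ [n]` (each element
included independently with probability `1 − 2^{−1/Δ_i}`), a fixed `I ⊆ [n]` of size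
`d`, `i₀` the least index `i ≥ 1` with `Q_i ∩ I = ∅`, and `D = 2·Δ_{i₀}·log₂(2/δ)`:
`E[i₀] ≤ √L + 3`, and with probability at least `1 − δ`,
`d ≤ D ≤ 2·(2d/δ)^{2^{2√L + 1}}·log₂(2/δ)`, where `L = log₂ log₂ (2d/δ)`. -/
theorem stmt15 {n : ℕ} (δ : ℝ) (hδ : 0 < δ) (hδ1 : δ < 1)
    (d : ℕ) (hd : 1 ≤ d) (hdn : d ≤ n)
    (L : ℝ) (hL : L = Real.logb 2 (Real.logb 2 (2 * (d : ℝ) / δ)))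
    (Δ : ℕ → ℝ) (hΔ : ∀ i, Δ i = (2 : ℝ) ^ ((2 : ℝ) ^ ((i : ℝ) ^ 2)))
    {Ω : Type} [MeasurableSpace Ω] (μ : Measure Ω) [IsProbabilityMeasure μ]
    (Q : ℕ → Ω → Finset (Fin n))
    (hindep : iIndepFun (m := fun _ => (⊤ : MeasurableSpace (Finset (Fin n)))) Q μ)
    (hdist : ∀ i, 1 ≤ i → ∀ s : Finset (Fin n),
      μ {ω | Q i ω = s} = ENNReal.ofReal (∏ j : Fin n,
        if j ∈ s then 1 - (2 : ℝ) ^ (-(1 / Δ i)) else (2 : ℝ) ^ (-(1 / Δ i))))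
    (I : Finset (Fin n)) (hI : I.card = d)
    (i₀ : Ω → ℕ) (hi₀ : ∀ ω, i₀ ω = sInf {i | 1 ≤ i ∧ Q i ω ∩ I = ∅})
    (D : Ω → ℝ) (hD : ∀ ω, D ω = 2 * Δ (i₀ ω) * Real.logb 2 (2 / δ)) :
    ∫⁻ ω, (i₀ ω : ENNReal) ∂μ ≤ ENNReal.ofReal (Real.sqrt L + 3) ∧
      ENNReal.ofReal (1 - δ) ≤
        μ {ω | (d : ℝ) ≤ D ω ∧
          D ω ≤ 2 * (2 * (d : ℝ) / δ) ^ ((2 : ℝ) ^ (2 * Real.sqrt L + 1)) *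
            Real.logb 2 (2 / δ)} :=
  stmt15_general δ hδ hδ1 d hd L hL Δ hΔ μ Q hdist I hI i₀ hi₀ D hD
end
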